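/- In the two-worker extended mechanism, a beginner's deceptive report loses only against the unanswered option: for each worker i, a type-B worker's payoff from reporting E equals the payoff from reporting B whenever the opponent reports B or E, while against an opponent reporting U, reporting E yields payoff 2 and reporting B yields payoff 4 (a loss of exactly 2). -/

import Mathlib

/-- Worker types: beginner or expert. -/
inductive WorkerType | B | E
deriving DecidableEq

/-- Contracts: salary High/Low paired with task Mixed/Delicate/Perfunctory. -/
inductive Contract | HM | HD | LM | LP
deriving DecidableEq

/-- A worker's payoff from a contract, given the worker's own type. -/
def payoff : Contract → WorkerType → ℝ
  | .HM, .E => 4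
  | .HD, .E => 2
  | .LM, .E => 1
  | .LP, .E => 0
  | .HM, .B => 4
  | .HD, .B => 2
  | .LM, .B => 2
  | .LP, .B => 4

/-- The direct mechanism: a pair of reports ↦ (worker 1's contract, worker 2's contract). -/
def directPair : WorkerType → WorkerType → Contract × Contract
  | .B, .B => (.LM, .LM)
  | .B, .E => (.LP, .HD)
  | .E, .B => (.HD, .LP)
  | .E, .E => (.HM, .HM)

/-- Contract assigned by the direct mechanism to worker `i` under report profile `r`. -/
def directM (r : Fin 2 → WorkerType) (i : Fin 2) : Contract :=
  if i = 0 then (directPair (r 0) (r 1)).1 else (directPair (r 0) (r 1)).2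

/-- Reports in the extended mechanism: beginner, expert, or leave unanswered. -/
inductive Report | B | E | U
deriving DecidableEq

/-- The report naming a worker's type. -/
def toRep : WorkerType → Report
  | .B => .B
  | .E => .E

/-- The extended mechanism: a pair of reports ↦ (worker 1's contract, worker 2's contract). -/
def extPair : Report → Report → Contract × Contract
  | .B, .B => (.LM, .LM)
  | .B, .E => (.LP, .HD)
  | .E, .B => (.HD, .LP)
  | .E, .E => (.HM, .HM)
  | .B, .U => (.LP, .HD)
  | .E, .U => (.HD, .LP)
  | .U, .B => (.HD, .LP)
  | .U, .E => (.LP, .HD)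
  | .U, .U => (.LM, .LM)

/-- Contract assigned by the extended mechanism to worker `i` under report profile `r`. -/
def extM (r : Fin 2 → Report) (i : Fin 2) : Contract :=
  if i = 0 then (extPair (r 0) (r 1)).1 else (extPair (r 0) (r 1)).2

theorem extPair_swap (r s : Report) : extPair s r = (extPair r s).swap := by
  cases r <;> cases s <;> rfl

theorem extM_update_self (m : Fin 2 → Report) (i : Fin 2) (x : Report) :
    extM (Function.update m i x) i = (extPair x (m i.rev)).1 := by
  fin_cases i
  · simp [extM]
  · simpa [extM] using congrArg Prod.snd (extPair_swap x (m 0))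

theorem payoff_beginner_deceive_eq_truthful {s : Report} (hs : s ≠ .U) :
    payoff (extPair .E s).1 .B = payoff (extPair .B s).1 .B := by
  cases s <;> first | rfl | contradiction

theorem payoff_beginner_vs_unanswered :
    payoff (extPair .E .U).1 .B = 2 ∧ payoff (extPair .B .U).1 .B = 4 :=
  ⟨rfl, rfl⟩

/-- In the extended mechanism, a beginner's deceptive report E loses only against
the unanswered option: it ties with truthful B whenever the opponent reports B or
E, and against an opponent reporting U it yields 2 while B yields 4. -/
theorem deceptive_loses_only_vs_unanswered :
    ∀ (i : Fin 2) (m : Fin 2 → Report),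
      -- if the opponent does not report U, reporting E and reporting B tie
      ((∀ j, j ≠ i → m j ≠ Report.U) →
        payoff (extM (Function.update m i Report.E) i) WorkerType.B =
          payoff (extM (Function.update m i Report.B) i) WorkerType.B) ∧
      -- if the opponent reports U, E yields 2 and B yields 4
      ((∀ j, j ≠ i → m j = Report.U) →
        payoff (extM (Function.update m i Report.E) i) WorkerType.B = 2 ∧
        payoff (extM (Function.update m i Report.B) i) WorkerType.B = 4) := by
  intro i m
  have hrev : i.rev ≠ i := by fin_cases i <;> decide
  simp only [extM_update_self]
  exact ⟨fun hopp => payoff_beginner_deceive_eq_truthful (hopp _ hrev),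
    fun hopp => hopp _ hrev ▸ payoff_beginner_vs_unanswered⟩
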